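/- arXiv:2211.14503 — 2 statements merged into one kernel-verified Lean document; each statement's English description precedes it below -/
import Mathlib

section
/- Let w ~ N(0, I_{n}) and b ~ N(0,1) be independent, and let x, x̃ ∈ ℝⁿ and ω ∈ ℝ. Then E[sin(ω(wᵀx + b)) · sin(ω(wᵀx̃ + b))] = (1/2)(exp(-(ω²/2)‖x - x̃‖₂²) - exp(-(ω²/2)‖x + x̃‖₂²) · exp(-2ω²)). -/
/-!
Writing `sin s * sin t = (cos (s - t) - cos (s + t)) / 2` reduces the kernel to integrals of
`cos (⟪w, a⟫ + β b)`, i.e. to real parts of the characteristic function of the standard Gaussian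
`(w, b)`, which factors over the independent coordinates into `exp (-(‖a‖² + β²) / 2)`.
With `a = ω (x ∓ x̃)` and `β = 0`, resp. `β = 2ω`, this gives the two exponentials.
-/

open MeasureTheory ProbabilityTheory Complex

lemma Real.sin_mul_sin (s t : ℝ) :
    Real.sin s * Real.sin t = (Real.cos (s - t) - Real.cos (s + t)) / 2 := by
  rw [Real.cos_sub, Real.cos_add]
  ring

section CosIntegral

variable {X : Type*} [MeasurableSpace X] {μ : Measure X} [IsFiniteMeasure μ] {f : X → ℝ}

lemma integrable_cos_comp (hf : AEMeasurable f μ) : Integrable (fun x => Real.cos (f x)) μ :=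
  (integrable_const (1 : ℝ)).mono' (by fun_prop) (by simp [Real.abs_cos_le_one])

lemma integral_cos_eq_re_integral_cexp (hf : AEMeasurable f μ) :
    ∫ x, Real.cos (f x) ∂μ = (∫ x, cexp (f x * I) ∂μ).re := by
  have hint : Integrable (fun x => cexp (f x * I)) μ :=
    (integrable_const (1 : ℝ)).mono' (by fun_prop) (by simp [norm_exp_ofReal_mul_I])
  rw [← RCLike.re_to_complex, ← integral_re hint]
  simp only [RCLike.re_to_complex, exp_ofReal_mul_I_re]

end CosIntegral

section StandardGaussian

variable {ι : Type*} [Fintype ι]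

lemma integral_cexp_sum_pi_gaussianReal (a : ι → ℝ) :
    ∫ w, cexp ((∑ j, w j * a j : ℝ) * I) ∂(Measure.pi fun _ : ι => gaussianReal 0 1) =
      Real.exp (-(∑ j, a j ^ 2) / 2) := by
  simp_rw [ofReal_sum, Finset.sum_mul, exp_sum]
  rw [integral_fintype_prod_eq_prod (fun j (t : ℝ) => cexp ((t * a j : ℝ) * I))]
  simp_rw [ofReal_mul, mul_comm _ (a _ : ℂ), ← charFun_apply_real, charFun_gaussianReal,
    ← exp_sum]
  push_cast
  simp [Finset.sum_div, neg_div]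

lemma integral_cexp_linear_gaussian (a : ι → ℝ) (β : ℝ) :
    ∫ p : (ι → ℝ) × ℝ, cexp ((∑ j, p.1 j * a j + β * p.2 : ℝ) * I)
        ∂((Measure.pi fun _ : ι => gaussianReal 0 1).prod (gaussianReal 0 1)) =
      Real.exp (-(∑ j, a j ^ 2 + β ^ 2) / 2) := by
  simp_rw [ofReal_add, add_mul, exp_add]
  rw [integral_prod_mul (fun w : ι → ℝ => cexp ((∑ j, w j * a j : ℝ) * I))
    (fun t => cexp ((β * t : ℝ) * I)), integral_cexp_sum_pi_gaussianReal]
  simp_rw [ofReal_mul, ← charFun_apply_real, charFun_gaussianReal]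
  push_cast
  rw [← exp_add]
  ring_nf

lemma integral_cos_linear_gaussian (a : ι → ℝ) (β : ℝ) :
    ∫ p : (ι → ℝ) × ℝ, Real.cos (∑ j, p.1 j * a j + β * p.2)
        ∂((Measure.pi fun _ : ι => gaussianReal 0 1).prod (gaussianReal 0 1)) =
      Real.exp (-(∑ j, a j ^ 2 + β ^ 2) / 2) := by
  rw [integral_cos_eq_re_integral_cexp (by fun_prop), integral_cexp_linear_gaussian,
    ofReal_re]

end StandardGaussian

theorem shallow_ssn_nngp (n : ℕ) (ω : ℝ) (x x' : Fin n → ℝ) :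
    ∫ p : (Fin n → ℝ) × ℝ,
        Real.sin (ω * ((∑ j, p.1 j * x j) + p.2)) *
          Real.sin (ω * ((∑ j, p.1 j * x' j) + p.2))
        ∂((Measure.pi fun _ : Fin n => gaussianReal 0 1).prod (gaussianReal 0 1)) =
      1 / 2 * (Real.exp (-(ω ^ 2 / 2) * ∑ j, (x j - x' j) ^ 2) -
        Real.exp (-(ω ^ 2 / 2) * ∑ j, (x j + x' j) ^ 2) * Real.exp (-2 * ω ^ 2)) := by
  have product_to_sum : ∀ p : (Fin n → ℝ) × ℝ,
      Real.sin (ω * ((∑ j, p.1 j * x j) + p.2)) * Real.sin (ω * ((∑ j, p.1 j * x' j) + p.2)) =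
        (Real.cos (∑ j, p.1 j * (ω * (x j - x' j)) + 0 * p.2) -
          Real.cos (∑ j, p.1 j * (ω * (x j + x' j)) + 2 * ω * p.2)) / 2 := by
    intro p
    rw [Real.sin_mul_sin]
    congr 3
    · simp only [mul_add, mul_sub, Finset.mul_sum, Finset.sum_sub_distrib, mul_left_comm ω]
      ring
    · simp only [mul_add, Finset.mul_sum, Finset.sum_add_distrib, mul_left_comm ω]
      ring
  rw [integral_congr_ae (ae_of_all _ product_to_sum), integral_div,
    integral_sub (integrable_cos_comp (by fun_prop)) (integrable_cos_comp (by fun_prop)),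
    integral_cos_linear_gaussian, integral_cos_linear_gaussian, ← Real.exp_add]
  simp only [mul_pow, ← Finset.mul_sum]
  ring_nf
end

section
/- Let w ~ N(0, I_{n}) and b ~ N(0,1) be independent, and let x, x̃ ∈ ℝⁿ and ω ∈ ℝ. Then E[cos(ω(wᵀx + b)) · cos(ω(wᵀx̃ + b))] = (1/2)(exp(-(ω²/2)‖x - x̃‖₂²) + exp(-(ω²/2)‖x + x̃‖₂²) · exp(-2ω²)). -/
/-!
Product-to-sum turns the integrand into the average of `cos (w ⬝ᵥ ω • (x - x'))` and
`cos (w ⬝ᵥ ω • (x + x') + 2ω b)`. The cosine of a linear form `w ⬝ᵥ a + κ b` in independent standard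
Gaussians is the real part of a product of Gaussian characteristic functions, so its mean is
`exp (-(‖a‖² + κ²) / 2)`.
-/

open MeasureTheory ProbabilityTheory Complex

lemma integrable_cos_comp_s6 {α : Type*} [MeasurableSpace α] (μ : Measure α) [IsFiniteMeasure μ]
    {f : α → ℝ} (hf : Measurable f) : Integrable (fun x ↦ Real.cos (f x)) μ :=
  .of_bound (by fun_prop) 1 (.of_forall fun x ↦ by simpa using Real.abs_cos_le_one (f x))

lemma integral_cos_eq_re_integral_cexp_mul_I {α : Type*} [MeasurableSpace α] (μ : Measure α)
    [IsFiniteMeasure μ] {f : α → ℝ} (hf : Measurable f) :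
    ∫ x, Real.cos (f x) ∂μ = (∫ x, cexp (f x * I) ∂μ).re := by
  have hint : Integrable (fun x ↦ cexp (f x * I)) μ :=
    .of_bound (by fun_prop) 1 (.of_forall fun x ↦ (norm_exp_ofReal_mul_I _).le)
  rw [← RCLike.re_to_complex, ← integral_re hint]
  simp [exp_ofReal_mul_I_re]

lemma integral_cexp_dotProduct_mul_I_pi_gaussianReal {ι : Type*} [Fintype ι] (a : ι → ℝ) :
    ∫ w, cexp ((w ⬝ᵥ a : ℝ) * I) ∂(Measure.pi fun _ : ι ↦ gaussianReal 0 1) =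
      cexp (-(a ⬝ᵥ a : ℝ) / 2) := by
  simp_rw [dotProduct, ofReal_sum, Finset.sum_mul, exp_sum]
  rw [integral_fintype_prod_eq_prod (f := fun i y ↦ cexp ((y * a i : ℝ) * I))]
  simp_rw [ofReal_mul, mul_comm _ (a _ : ℂ), ← charFun_apply_real, charFun_gaussianReal]
  simp [← exp_sum, Finset.sum_div, neg_div, pow_two]

lemma integral_cos_dotProduct_add_mul_pi_prod_gaussianReal {ι : Type*} [Fintype ι]
    (a : ι → ℝ) (κ : ℝ) :
    ∫ p : (ι → ℝ) × ℝ, Real.cos (p.1 ⬝ᵥ a + κ * p.2)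
        ∂((Measure.pi fun _ ↦ gaussianReal 0 1).prod (gaussianReal 0 1)) =
      Real.exp (-(a ⬝ᵥ a + κ ^ 2) / 2) := by
  rw [integral_cos_eq_re_integral_cexp_mul_I _ (by fun_prop)]
  simp_rw [ofReal_add, add_mul, exp_add]
  rw [integral_prod_mul (f := fun w ↦ cexp ((w ⬝ᵥ a : ℝ) * I))
      (g := fun b ↦ cexp ((κ * b : ℝ) * I)),
    integral_cexp_dotProduct_mul_I_pi_gaussianReal]
  simp_rw [ofReal_mul, ← charFun_apply_real, charFun_gaussianReal, ← exp_add]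
  convert exp_ofReal_re (-(a ⬝ᵥ a + κ ^ 2) / 2) using 3
  push_cast
  ring

lemma Real.cos_mul_cos (x y : ℝ) :
    Real.cos x * Real.cos y = (Real.cos (x - y) + Real.cos (x + y)) / 2 := by
  rw [Real.cos_sub, Real.cos_add]
  ring

theorem shallow_ssn_sigma_dot (n : ℕ) (ω : ℝ) (x x' : Fin n → ℝ) :
    ∫ p : (Fin n → ℝ) × ℝ,
        Real.cos (ω * ((∑ j, p.1 j * x j) + p.2)) *
          Real.cos (ω * ((∑ j, p.1 j * x' j) + p.2))
        ∂((Measure.pi fun _ : Fin n => gaussianReal 0 1).prod (gaussianReal 0 1)) =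
      1 / 2 * (Real.exp (-(ω ^ 2 / 2) * ∑ j, (x j - x' j) ^ 2) +
        Real.exp (-(ω ^ 2 / 2) * ∑ j, (x j + x' j) ^ 2) * Real.exp (-2 * ω ^ 2)) := by
  set μ := (Measure.pi fun _ : Fin n => gaussianReal 0 1).prod (gaussianReal 0 1)
  have h_sub (p : (Fin n → ℝ) × ℝ) : ω * (p.1 ⬝ᵥ x + p.2) - ω * (p.1 ⬝ᵥ x' + p.2) =
      p.1 ⬝ᵥ (ω • (x - x')) + 0 * p.2 := by
    simp only [dotProduct_smul, dotProduct_sub, smul_eq_mul]; ring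
  have h_add (p : (Fin n → ℝ) × ℝ) : ω * (p.1 ⬝ᵥ x + p.2) + ω * (p.1 ⬝ᵥ x' + p.2) =
      p.1 ⬝ᵥ (ω • (x + x')) + 2 * ω * p.2 := by
    simp only [dotProduct_smul, dotProduct_add, smul_eq_mul]; ring
  have h_sq (v : Fin n → ℝ) : (ω • v) ⬝ᵥ (ω • v) = ω ^ 2 * ∑ j, v j ^ 2 := by
    simp only [dotProduct, Pi.smul_apply, smul_eq_mul, Finset.mul_sum]
    exact Finset.sum_congr rfl fun j _ ↦ by ring
  change ∫ p, Real.cos (ω * (p.1 ⬝ᵥ x + p.2)) * Real.cos (ω * (p.1 ⬝ᵥ x' + p.2)) ∂μ = _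
  simp_rw [Real.cos_mul_cos, h_sub, h_add]
  rw [integral_div,
    integral_add (integrable_cos_comp_s6 μ (by fun_prop)) (integrable_cos_comp_s6 μ (by fun_prop)),
    integral_cos_dotProduct_add_mul_pi_prod_gaussianReal,
    integral_cos_dotProduct_add_mul_pi_prod_gaussianReal, h_sq, h_sq, ← Real.exp_add]
  simp only [Pi.sub_apply, Pi.add_apply]
  ring_nf
end
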